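/- Fix i with 1 ≤ i ≤ k and t ∈ Kˣ. For a point x define t·x : S → K by (t·x)(u) := t^{⟨p_i, u⟩} · x(u) (the action of the one-parameter subgroup R_{p_i} of the torus). Then: (a) t·x is a point; (b) (t·x) * (t·y) = t·(x*y) for all points x, y; (c) consequently, if x is an idempotent (x*x = x) then so is t·x. (This is Lemma 8.3: the set of idempotents of a root monoid is invariant under every one-parameter subgroup R_i with p_i ∈ τ, hence under R_τ.) -/

import Mathlib

open Finset

def pairZ {n : ℕ} (v u : Fin n → ℤ) : ℤ := ∑ i, v i * u i

def InS {n m : ℕ} (q : Fin m → Fin n → ℤ) (u : Fin n → ℤ) : Prop :=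
  ∀ j, 0 ≤ pairZ (q j) u

def IsPoint {n m : ℕ} {K : Type*} [Field K] (q : Fin m → Fin n → ℤ)
    (x : (Fin n → ℤ) → K) : Prop :=
  x 0 = 1 ∧ ∀ u v : Fin n → ℤ, InS q u → InS q v → x (u + v) = x u * x v

def Compatible {n m k : ℕ} (hkm : k ≤ m) (q : Fin m → Fin n → ℤ)
    (e : Fin k → Fin n → ℤ) : Prop :=
  (∀ r s : Fin k, pairZ (q (Fin.castLE hkm s)) (e r) = if r = s then -1 else 0) ∧
  (∀ (r : Fin k) (j : Fin m), k ≤ (j : ℕ) → 0 ≤ pairZ (q j) (e r))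

noncomputable def rmul {n m k : ℕ} {K : Type*} [Field K] (hkm : k ≤ m)
    (q : Fin m → Fin n → ℤ) (e1 e2 : Fin k → Fin n → ℤ)
    (x y : (Fin n → ℤ) → K) : (Fin n → ℤ) → K :=
  fun u =>
    ∑ i ∈ Fintype.piFinset (fun r : Fin k =>
        Finset.range ((pairZ (q (Fin.castLE hkm r)) u).toNat + 1)),
      (∏ r : Fin k, ((pairZ (q (Fin.castLE hkm r)) u).toNat.choose (i r) : K)) *
        x (u + ∑ r : Fin k, (i r : ℤ) • e2 r) *
        y (u + ∑ r : Fin k, (pairZ (q (Fin.castLE hkm r)) u - (i r : ℤ)) • e1 r)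

noncomputable def xtau {n m k : ℕ} (K : Type*) [Field K] (hkm : k ≤ m)
    (q : Fin m → Fin n → ℤ) : (Fin n → ℤ) → K :=
  fun u => if ∀ r : Fin k, pairZ (q (Fin.castLE hkm r)) u = 0 then 1 else 0

/-
The pairing with `p_i` is additive, and a root `e^{(r)}` lowers it by `δ_{ri}`. In the `i`-th
summand of `x * y` at `u`, the argument of `x` therefore has `p_i`-degree `⟨p_i,u⟩ - i_i` and
that of `y` has degree `i_i`, so scaling `x` and `y` by `t^{⟨p_i,·⟩}` scales every summand by
`t^{⟨p_i,u⟩}`.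
-/

lemma pairZ_zero {n : ℕ} (v : Fin n → ℤ) : pairZ v 0 = 0 := by
  simp [pairZ]

lemma pairZ_add {n : ℕ} (v u w : Fin n → ℤ) :
    pairZ v (u + w) = pairZ v u + pairZ v w := by
  simp [pairZ, mul_add, Finset.sum_add_distrib]

lemma pairZ_smul {n : ℕ} (v : Fin n → ℤ) (c : ℤ) (e : Fin n → ℤ) :
    pairZ v (c • e) = c * pairZ v e := by
  simp only [pairZ, Pi.smul_apply, smul_eq_mul, Finset.mul_sum]
  exact Finset.sum_congr rfl fun _ _ => by ring

lemma pairZ_sum {n k : ℕ} (v : Fin n → ℤ) (f : Fin k → Fin n → ℤ) :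
    pairZ v (∑ r, f r) = ∑ r, pairZ v (f r) := by
  simp only [pairZ, Finset.sum_apply, Finset.mul_sum]
  rw [Finset.sum_comm]

lemma pairZ_sum_smul_roots {n m k : ℕ} {hkm : k ≤ m} {q : Fin m → Fin n → ℤ}
    {e : Fin k → Fin n → ℤ}
    (he : ∀ r s : Fin k, pairZ (q (Fin.castLE hkm s)) (e r) = if r = s then -1 else 0)
    (c : Fin k → ℤ) (s : Fin k) :
    pairZ (q (Fin.castLE hkm s)) (∑ r, c r • e r) = -c s := by
  simp only [pairZ_sum, pairZ_smul, he, mul_ite, mul_neg, mul_one, mul_zero,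
    Finset.sum_ite_eq', Finset.mem_univ, if_true]

def torusAct {n : ℕ} {K : Type*} [Field K] (p : Fin n → ℤ) (t : K)
    (x : (Fin n → ℤ) → K) : (Fin n → ℤ) → K :=
  fun u => t ^ pairZ p u * x u

lemma isPoint_torusAct {n m : ℕ} {K : Type*} [Field K] {q : Fin m → Fin n → ℤ}
    {x : (Fin n → ℤ) → K} (hx : IsPoint q x) (p : Fin n → ℤ) {t : K} (ht : t ≠ 0) :
    IsPoint q (torusAct p t x) := by
  refine ⟨by simp [torusAct, pairZ_zero, hx.1], fun u v hu hv => ?_⟩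
  simp only [torusAct, pairZ_add, hx.2 u v hu hv, zpow_add₀ ht]
  ring

lemma rmul_torusAct {n m k : ℕ} {K : Type*} [Field K] {hkm : k ≤ m}
    {q : Fin m → Fin n → ℤ} {e1 e2 : Fin k → Fin n → ℤ}
    (he1 : Compatible hkm q e1) (he2 : Compatible hkm q e2) (i : Fin k) {t : K} (ht : t ≠ 0)
    (x y : (Fin n → ℤ) → K) :
    rmul hkm q e1 e2 (torusAct (q (Fin.castLE hkm i)) t x) (torusAct (q (Fin.castLE hkm i)) t y)
      = torusAct (q (Fin.castLE hkm i)) t (rmul hkm q e1 e2 x y) := by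
  funext u
  simp only [rmul, torusAct, Finset.mul_sum]
  refine Finset.sum_congr rfl fun f _ => ?_
  set a := pairZ (q (Fin.castLE hkm i)) u
  rw [pairZ_add, pairZ_sum_smul_roots he2.1, pairZ_add, pairZ_sum_smul_roots he1.1]
  have hdeg : t ^ (a + -(f i : ℤ)) * t ^ (a + -(a - (f i : ℤ))) = t ^ a := by
    rw [← zpow_add₀ ht]
    ring_nf
  linear_combination
    (∏ r : Fin k, ((pairZ (q (Fin.castLE hkm r)) u).toNat.choose (f r) : K)) *
      x (u + ∑ r : Fin k, (f r : ℤ) • e2 r) *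
      y (u + ∑ r : Fin k, (pairZ (q (Fin.castLE hkm r)) u - (f r : ℤ)) • e1 r) * hdeg

theorem statement_15_general {n m k : ℕ} {K : Type*} [Field K]
    (hkm : k ≤ m)
    (q : Fin m → Fin n → ℤ) (e1 e2 : Fin k → Fin n → ℤ)
    (he1 : Compatible hkm q e1) (he2 : Compatible hkm q e2)
    (i : Fin k) (t : Kˣ)
    (act : ((Fin n → ℤ) → K) → ((Fin n → ℤ) → K))
    (hact : ∀ (x : (Fin n → ℤ) → K) (u : Fin n → ℤ),
      act x u = (t : K) ^ (pairZ (q (Fin.castLE hkm i)) u) * x u) :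
    (∀ x : (Fin n → ℤ) → K, IsPoint q x → IsPoint q (act x)) ∧
    (∀ x y : (Fin n → ℤ) → K, IsPoint q x → IsPoint q y →
      ∀ u : Fin n → ℤ, InS q u →
        rmul hkm q e1 e2 (act x) (act y) u = act (rmul hkm q e1 e2 x y) u) ∧
    (∀ x : (Fin n → ℤ) → K, IsPoint q x →
      (∀ u : Fin n → ℤ, InS q u → rmul hkm q e1 e2 x x u = x u) →
      ∀ u : Fin n → ℤ, InS q u →
        rmul hkm q e1 e2 (act x) (act x) u = act x u) := by
  have hact : act = torusAct (q (Fin.castLE hkm i)) (t : K) :=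
    funext fun x => funext fun u => hact x u
  subst hact
  have hmul := rmul_torusAct (K := K) he1 he2 i t.ne_zero
  refine ⟨fun x hx => isPoint_torusAct hx _ t.ne_zero, fun x y _ _ u _ => by rw [hmul], ?_⟩
  intro x _ hidem u hu
  rw [hmul]
  simp only [torusAct, hidem u hu]

theorem statement_15 {n m k : ℕ} {K : Type*} [Field K] [CharZero K]
    (hn : 1 ≤ n) (hk : 1 ≤ k) (hkm : k ≤ m)
    (q : Fin m → Fin n → ℤ) (e1 e2 : Fin k → Fin n → ℤ)
    (he1 : Compatible hkm q e1) (he2 : Compatible hkm q e2)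
    (i : Fin k) (t : Kˣ)
    (act : ((Fin n → ℤ) → K) → ((Fin n → ℤ) → K))
    (hact : ∀ (x : (Fin n → ℤ) → K) (u : Fin n → ℤ),
      act x u = (t : K) ^ (pairZ (q (Fin.castLE hkm i)) u) * x u) :
    (∀ x : (Fin n → ℤ) → K, IsPoint q x → IsPoint q (act x)) ∧
    (∀ x y : (Fin n → ℤ) → K, IsPoint q x → IsPoint q y →
      ∀ u : Fin n → ℤ, InS q u →
        rmul hkm q e1 e2 (act x) (act y) u = act (rmul hkm q e1 e2 x y) u) ∧
    (∀ x : (Fin n → ℤ) → K, IsPoint q x →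
      (∀ u : Fin n → ℤ, InS q u → rmul hkm q e1 e2 x x u = x u) →
      ∀ u : Fin n → ℤ, InS q u →
        rmul hkm q e1 e2 (act x) (act x) u = act x u) :=
  statement_15_general hkm q e1 e2 he1 he2 i t act hact
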